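/- arXiv:0904.3977 — 3 statements merged into one kernel-verified Lean document; each statement's English description precedes it below -/
import Mathlib

section
/- Let s be a positive integer and r ≥ 2s+1. Then there exists a function g from the s-subsets of [r] = {0,1,...,r-1} to the 2s-subsets of [r] such that (I) for every s-subset A, A ⊂ g(A), and (II) for any two s-subsets A, B with A ∩ B = ∅, g(A) ≠ g(B). -/
/-!
Fix `a ∈ A` and extend `A` by the `s` elements of its complement that come first in the cyclic
order of `ℤ/r` starting at `a`. If disjoint `A ∋ a` and `B ∋ b` had the same extension `C`,
then `b ∈ C \ A` and `a ∈ C \ B`, so a point `z ∉ C` (one exists as `2s < r`) would come after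
`b` when walking from `a` and after `a` when walking from `b`; these two walks cannot both
pass the other starting point before reaching `z`.
-/

theorem Finset.exists_subset_card_eq_forall_lt {α β : Type*} [DecidableEq α] [LinearOrder β]
    {f : α → β} {T : Finset α} (hf : Set.InjOn f T) {s : ℕ} (hs : s ≤ T.card) :
    ∃ P ⊆ T, P.card = s ∧ ∀ x ∈ P, ∀ z ∈ T \ P, f x < f z := by
  induction s with
  | zero => exact ⟨∅, empty_subset T, card_empty, by simp⟩
  | succ s ih =>
    obtain ⟨P, hPT, hPcard, hP⟩ := ih (by omega)
    have hrest : (T \ P).Nonempty := by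
      rw [← card_pos, card_sdiff_of_subset hPT]
      omega
    obtain ⟨m, hm, hmin⟩ := (T \ P).exists_min_image f hrest
    have hmP : m ∉ P := (mem_sdiff.mp hm).2
    refine ⟨insert m P, insert_subset (mem_sdiff.mp hm).1 hPT,
      by rw [card_insert_of_notMem hmP, hPcard], ?_⟩
    intro x hx z hz
    rw [sdiff_insert, mem_erase] at hz
    rcases mem_insert.mp hx with rfl | hx
    · exact (hmin z hz.2).lt_of_ne fun h =>
        hz.1 (hf (mem_sdiff.mp hz.2).1 (mem_sdiff.mp hm).1 h.symm)
    · exact hP x hx z hz.2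

namespace Fin

theorem val_sub_eq_ite {r : ℕ} (x y : Fin r) :
    (x - y).val = if y ≤ x then x.val - y.val else r + x.val - y.val := by
  split_ifs with h
  · exact coe_sub_iff_le.mpr h
  · exact coe_sub_iff_lt.mpr (not_le.mp h)

theorem not_val_sub_lt_of_val_sub_lt {r : ℕ} {a b : Fin r} (z : Fin r) (hab : a ≠ b)
    (h : (b - a).val < (z - a).val) : ¬ (a - b).val < (z - b).val := by
  have := val_ne_of_ne hab
  have := z.isLt
  simp only [val_sub_eq_ite, le_def] at *
  split_ifs at * <;> omega

theorem exists_superset_card_eq_forall_val_sub_lt {r : ℕ} [NeZero r] (A : Finset (Fin r))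
    (a : Fin r) {s : ℕ} (h : A.card + s ≤ r) :
    ∃ C, A ⊆ C ∧ C.card = A.card + s ∧ ∀ x ∈ C \ A, ∀ z ∉ C, (x - a).val < (z - a).val := by
  have hinj : Function.Injective fun x : Fin r => (x - a).val :=
    val_injective.comp (sub_left_injective (b := a))
  have hs : s ≤ Aᶜ.card := by
    rw [Finset.card_compl, Fintype.card_fin]
    omega
  obtain ⟨P, hPA, hPcard, hP⟩ := Finset.exists_subset_card_eq_forall_lt hinj.injOn hs
  have hdisj : Disjoint A P := Finset.disjoint_of_subset_right hPA disjoint_compl_right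
  refine ⟨A ∪ P, Finset.subset_union_left, by rw [Finset.card_union_of_disjoint hdisj, hPcard],
    fun x hx z hz => hP x ?_ z ?_⟩
  · rw [Finset.union_sdiff_left] at hx
    exact (Finset.mem_sdiff.mp hx).1
  · simp only [Finset.mem_union, not_or] at hz
    simpa [Finset.mem_sdiff] using hz

theorem eq_univ_of_disjoint_of_forall_val_sub_lt {r : ℕ} {A B C : Finset (Fin r)} {a b : Fin r}
    (hAB : Disjoint A B) (ha : a ∈ A) (hb : b ∈ B) (hAC : A ⊆ C) (hBC : B ⊆ C)
    (hA : ∀ x ∈ C \ A, ∀ z ∉ C, (x - a).val < (z - a).val)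
    (hB : ∀ x ∈ C \ B, ∀ z ∉ C, (x - b).val < (z - b).val) : C = Finset.univ := by
  refine Finset.eq_univ_of_forall fun z => by_contra fun hz => ?_
  have hbA : b ∈ C \ A := Finset.mem_sdiff.mpr ⟨hBC hb, Finset.disjoint_right.mp hAB hb⟩
  have haB : a ∈ C \ B := Finset.mem_sdiff.mpr ⟨hAC ha, Finset.disjoint_left.mp hAB ha⟩
  exact not_val_sub_lt_of_val_sub_lt z (ne_of_mem_of_not_mem ha (Finset.mem_sdiff.mp hbA).2)
    (hA b hbA z hz) (hB a haB z hz)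

end Fin

/-- For `0 < s` and `r ≥ 2s+1` there is a map `g` from `s`-subsets of
`[r] = Fin r` to `2s`-subsets of `[r]` with `A ⊂ g A`, and `g A ≠ g B` whenever
`A` and `B` are disjoint `s`-subsets. -/
theorem stmt0 (s r : ℕ) (hs : 0 < s) (hr : 2 * s + 1 ≤ r) :
    ∃ g : Finset (Fin r) → Finset (Fin r),
      (∀ A : Finset (Fin r), A.card = s → (g A).card = 2 * s ∧ A ⊂ g A) ∧
      (∀ A B : Finset (Fin r), A.card = s → B.card = s → Disjoint A B → g A ≠ g B) := by
  have : NeZero r := ⟨by omega⟩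
  have hext : ∀ A : Finset (Fin r), ∃ C, A.card = s → A ⊆ C ∧ C.card = 2 * s ∧
      ∃ a ∈ A, ∀ x ∈ C \ A, ∀ z ∉ C, (x - a).val < (z - a).val := by
    intro A
    by_cases hA : A.card = s
    · obtain ⟨a, ha⟩ := Finset.card_pos.mp (hA ▸ hs)
      obtain ⟨C, hAC, hC, hcyc⟩ := Fin.exists_superset_card_eq_forall_val_sub_lt A a (s := s)
        (by omega)
      exact ⟨C, fun _ => ⟨hAC, by omega, a, ha, hcyc⟩⟩
    · exact ⟨∅, fun h => absurd h hA⟩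
  choose g hg using hext
  refine ⟨g, fun A hA => ?_, fun A B hA hB hAB hgAB => ?_⟩
  · obtain ⟨hAg, hcard, -⟩ := hg A hA
    exact ⟨hcard, hAg.ssubset_of_ne fun h => by rw [← h] at hcard; omega⟩
  · obtain ⟨hAg, hcard, a, ha, hcycA⟩ := hg A hA
    obtain ⟨hBg, -, b, hb, hcycB⟩ := hg B hB
    rw [hgAB] at hAg hcard hcycA
    have huniv := Fin.eq_univ_of_disjoint_of_forall_val_sub_lt hAB ha hb hAg hBg hcycA hcycB
    rw [huniv, Finset.card_univ, Fintype.card_fin] at hcard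
    omega
end

section
/- Let n ≥ 3 and m ≥ 2n. Then the b-chromatic number of the Kneser graph KG(m,n) satisfies χ_b(KG(m,n)) ≥ 2 · C(⌊m/2⌋, n). -/
/-!
Split the ground set into two copies `X ⊕ X` of `X = [⌊m/2⌋]` and at most one extra point `z`.
A vertex avoiding `z` is a pair `(S, T)` of subsets of `X` with `|S| + |T| = n`; it gets the
colour `(U, ε)`, where `U ⊇ S ∪ T` is an `n`-subset of `X` and `ε` is a bit, and all vertices
through `z` share one more colour. Two disjoint vertices with the same `U` must get different
bits. If `S ∩ T = ∅` then `U = S ∪ T` and the only such neighbour is `(T, S)`, so `ε` has to flip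
when the two sides are swapped. Otherwise counting shows that `S ∩ T` and `S' ∩ T'` partition
`U \ (S ∆ T)`, a set both vertices compute alike, and `ε` records which of the two holds its
least element. The vertices `(U, ∅)`, `(∅, U)` and `{z} ∪ (K, ∅)` with `|K| = n - 1` then see
every other colour, which gives `2 C(⌊m/2⌋, n) + (m mod 2)` colours.
-/

/-- The Kneser graph `KG(m,n)`. -/
def kneser (m n : ℕ) : SimpleGraph {A : Finset (Fin m) // A.card = n} where
  Adj A B := Disjoint A.1 B.1 ∧ A ≠ B
  symm := ⟨fun _ _ h => ⟨h.1.symm, h.2.symm⟩⟩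
  loopless := ⟨fun _ h => h.2 rfl⟩

/-- `c` is a b-coloring of `G` with `t` colors. -/
def IsBColoring {V : Type*} (G : SimpleGraph V) (t : ℕ) (c : V → Fin t) : Prop :=
  (∀ v w, G.Adj v w → c v ≠ c w) ∧
  (∀ i : Fin t, ∃ v, c v = i ∧ ∀ j : Fin t, j ≠ i → ∃ w, G.Adj v w ∧ c w = j)

/-- The b-chromatic number. -/
noncomputable def bChromatic {V : Type*} (G : SimpleGraph V) : ℕ :=
  sSup {t | ∃ c : V → Fin t, IsBColoring G t c}

open Finset

section BColoring

variable {V W : Type*} {G : SimpleGraph V} {H : SimpleGraph W}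

theorem IsBColoring.comp_iso {t : ℕ} {c : W → Fin t} (hc : IsBColoring H t c) (e : G ≃g H) :
    IsBColoring G t (c ∘ e) := by
  refine ⟨fun v w hvw => hc.1 _ _ (e.map_adj_iff.2 hvw), fun i => ?_⟩
  obtain ⟨v, hv, hdom⟩ := hc.2 i
  refine ⟨e.symm v, by simpa using hv, fun j hj => ?_⟩
  obtain ⟨w, hvw, hw⟩ := hdom j hj
  exact ⟨e.symm w, e.symm.map_adj_iff.2 hvw, by simpa using hw⟩

theorem SimpleGraph.Iso.bChromatic_eq (e : G ≃g H) : bChromatic G = bChromatic H := by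
  unfold bChromatic
  congr 1
  ext t
  exact ⟨fun ⟨c, hc⟩ => ⟨c ∘ e.symm, hc.comp_iso e.symm⟩, fun ⟨c, hc⟩ => ⟨c ∘ e, hc.comp_iso e⟩⟩

theorem card_le_bChromatic [Finite V] {β : Type*} (c : V → β) (C : Finset β)
    (hc : ∀ v, c v ∈ C) (hproper : ∀ v w, G.Adj v w → c v ≠ c w)
    (hdom : ∀ i ∈ C, ∃ v, c v = i ∧ ∀ j ∈ C, j ≠ i → ∃ w, G.Adj v w ∧ c w = j) :
    #C ≤ bChromatic G := by
  have : Fintype V := Fintype.ofFinite V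
  let c' : V → Fin #C := fun v => C.equivFin ⟨c v, hc v⟩
  have hc' : ∀ v w, c' v = c' w ↔ c v = c w := by simp [c']
  have hbdd : BddAbove {t | ∃ c : V → Fin t, IsBColoring G t c} := by
    refine ⟨Fintype.card V, fun t ⟨d, hd⟩ => ?_⟩
    simpa using Fintype.card_le_of_surjective d fun i => (hd.2 i).imp fun _ h => h.1
  refine le_csSup hbdd ⟨c', fun v w hvw h => hproper v w hvw ((hc' v w).1 h), fun i => ?_⟩
  obtain ⟨v, hv, hdom⟩ := hdom _ (C.equivFin.symm i).2
  refine ⟨v, by simp [c', hv], fun j hj => ?_⟩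
  obtain ⟨w, hvw, hw⟩ := hdom _ (C.equivFin.symm j).2 (by simpa [Subtype.ext_iff] using hj)
  exact ⟨w, hvw, by simp [c', hw]⟩

end BColoring

theorem Finset.disjoint_disjSum_disjSum {α β : Type*} {s s' : Finset α} {t t' : Finset β} :
    Disjoint (s.disjSum t) (s'.disjSum t') ↔ Disjoint s s' ∧ Disjoint t t' := by
  simp only [disjoint_left, mem_disjSum]
  aesop

theorem Finset.exists_mem_notMem_of_card_eq_of_ne {α : Type*} [DecidableEq α] {s t : Finset α}
    (h : #s = #t) (hne : t ≠ s) : ∃ x ∈ t, x ∉ s :=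
  not_subset.1 fun hts => hne (eq_of_subset_of_card_le hts h.le)

def kneserGraph (α : Type*) (n : ℕ) : SimpleGraph {A : Finset α // A.card = n} where
  Adj A B := Disjoint A.1 B.1 ∧ A ≠ B
  symm := ⟨fun _ _ h => ⟨h.1.symm, h.2.symm⟩⟩
  loopless := ⟨fun _ h => h.2 rfl⟩

theorem kneser_eq_kneserGraph (m n : ℕ) : kneser m n = kneserGraph (Fin m) n := rfl

def kneserGraphCongr {α β : Type*} (e : α ≃ β) (n : ℕ) : kneserGraph α n ≃g kneserGraph β n where
  toEquiv := e.finsetCongr.subtypeEquiv fun A => by simp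
  map_rel_iff' := by
    intro A B
    simp [kneserGraph, Equiv.finsetCongr, Finset.disjoint_map, Subtype.ext_iff]

theorem card_le_bChromatic_kneserGraph {α β : Type*} [Finite α] {n : ℕ} (c : Finset α → β)
    (C : Finset β) (hc : ∀ A, #A = n → c A ∈ C)
    (hproper : ∀ A B, #A = n → #B = n → Disjoint A B → c A ≠ c B)
    (hdom : ∀ i ∈ C, ∃ A, #A = n ∧ c A = i ∧
      ∀ j ∈ C, j ≠ i → ∃ B, #B = n ∧ Disjoint A B ∧ c B = j) :
    #C ≤ bChromatic (kneserGraph α n) := by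
  refine card_le_bChromatic (fun A => c A.1) C (fun A => hc A.1 A.2)
    (fun A B hAB => hproper A.1 B.1 A.2 B.2 hAB.1) fun i hi => ?_
  obtain ⟨A, hA, hAi, hdom⟩ := hdom i hi
  refine ⟨⟨A, hA⟩, hAi, fun j hj hji => ?_⟩
  obtain ⟨B, hB, hAB, hBj⟩ := hdom j hj hji
  exact ⟨⟨B, hB⟩, ⟨hAB, fun h => hji (by simp_all)⟩, hBj⟩

namespace KneserBColoring

section Order

variable {X : Type*} [LinearOrder X]

def leastMem (W Q : Finset X) : Bool := decide (∃ x ∈ Q, x ∈ W ∧ ∀ y ∈ W, x ≤ y)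

theorem leastMem_iff {W : Finset X} (hW : W.Nonempty) (Q : Finset X) :
    leastMem W Q = true ↔ W.min' hW ∈ Q := by
  simp only [leastMem, decide_eq_true_eq]
  refine ⟨fun ⟨x, hxQ, hxW, hx⟩ => ?_, fun h => ⟨_, h, W.min'_mem hW, fun y => W.min'_le y⟩⟩
  rwa [le_antisymm (hx _ (W.min'_mem hW)) (W.min'_le x hxW)] at hxQ

theorem leastMem_eq_not {W Q Q' : Finset X} (hW : W.Nonempty) (hcover : W ⊆ Q ∪ Q')
    (hQ : Disjoint Q Q') : leastMem W Q = !leastMem W Q' := by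
  have key : W.min' hW ∈ Q ↔ W.min' hW ∉ Q' :=
    ⟨fun h h' => disjoint_left.1 hQ h h',
      (mem_union.1 (hcover (W.min'_mem hW))).resolve_right⟩
  simpa [Bool.eq_not] using
    (leastMem_iff hW Q).trans (key.trans (not_congr (leastMem_iff hW Q').symm))

-- Any sign that flips under `S ↔ T` separates spread vertices; the parity of the smaller side
-- is chosen because it is `false` on `(U, ∅)`, `({x}, U \ {x})` and `true` on `(∅, U)`,
-- `(U \ {x}, {x})`, the vertices the b-vertices need as neighbours.
def spreadSign (S T : Finset X) : Bool :=
  if #S < #T then decide (Even #S)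
  else if #T < #S then !decide (Even #T)
  else leastMem (S ∪ T) T

theorem spreadSign_swap {S T : Finset X} (hST : Disjoint S T) (hne : (S ∪ T).Nonempty) :
    spreadSign T S = !spreadSign S T := by
  unfold spreadSign
  rcases lt_trichotomy #S #T with h | h | h
  · simp [h, h.not_gt]
  · simpa [h, union_comm T S] using leastMem_eq_not hne subset_rfl hST
  · simp [h, h.not_gt]

theorem spreadSign_empty_left {T : Finset X} (hT : T.Nonempty) : spreadSign ∅ T = true := by
  simp [spreadSign, hT.card_pos]

theorem spreadSign_empty_right {S : Finset X} (hS : S.Nonempty) : spreadSign S ∅ = false := by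
  simp [spreadSign, hS.card_pos]

theorem spreadSign_singleton_left {T : Finset X} (x : X) (hT : 1 < #T) :
    spreadSign {x} T = false := by
  simp [spreadSign, hT]

theorem spreadSign_singleton_right {S : Finset X} (x : X) (hS : 1 < #S) :
    spreadSign S {x} = true := by
  simp [spreadSign, hS, hS.not_gt]

end Order

section Pairs

variable {X : Type*} [DecidableEq X]

theorem eq_swap_of_union_eq {S T S' T' : Finset X} (hS : Disjoint S S') (hT : Disjoint T T')
    (h : S ∪ T = S' ∪ T') : S' = T ∧ T' = S := by
  rw [disjoint_left] at hS hT
  simp only [Finset.ext_iff, mem_union] at h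
  constructor <;> ext x <;> have := h x <;> have := @hS x <;> have := @hT x <;> tauto

theorem inter_eq_sdiff_of_subset {S T S' T' U : Finset X}
    (h : #S + #T = #U) (h' : #S' + #T' = #U) (hS : Disjoint S S') (hT : Disjoint T T')
    (hU : S ∪ T ⊆ U) (hU' : S' ∪ T' ⊆ U) :
    S ∩ T = (S ∪ T) \ (S' ∪ T') ∧ #(S ∩ T) = #(S' ∩ T') ∧ S ∪ T ∪ (S' ∪ T') = U := by
  have hD : S ∩ T ⊆ (S ∪ T) \ (S' ∪ T') := fun x hx => by
    rw [mem_inter] at hx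
    exact mem_sdiff.2 ⟨mem_union_left _ hx.1, fun h' => (mem_union.1 h').elim
      (disjoint_left.1 hS hx.1) (disjoint_left.1 hT hx.2)⟩
  have hD' : S' ∩ T' ⊆ (S' ∪ T') \ (S ∪ T) := fun x hx => by
    rw [mem_inter] at hx
    exact mem_sdiff.2 ⟨mem_union_left _ hx.1, fun h' => (mem_union.1 h').elim
      (disjoint_right.1 hS hx.1) (disjoint_right.1 hT hx.2)⟩
  -- `|S ∪ T| + |S ∩ T| = |U| = |S' ∪ T'| + |S' ∩ T'|` and `|S ∪ T ∪ (S' ∪ T')| ≤ |U|` leave no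
  -- room for strict inclusions in `hD` and `hD'`.
  have := card_union_add_card_inter S T
  have := card_union_add_card_inter S' T'
  have := card_sdiff_add_card (S ∪ T) (S' ∪ T')
  have := card_sdiff_add_card (S' ∪ T') (S ∪ T)
  have := card_le_card (union_subset hU hU')
  have := card_le_card (union_subset hU' hU)
  have := card_le_card hD
  have := card_le_card hD'
  exact ⟨eq_of_subset_of_card_le hD (by omega), by omega,
    eq_of_subset_of_card_le (union_subset hU hU') (by omega)⟩

end Pairs

section PairColor

variable {X : Type*} [LinearOrder X] [Fintype X] {n : ℕ}

noncomputable def extend (n : ℕ) (P : Finset X) : Finset X :=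
  if h : ∃ U, P ⊆ U ∧ #U = n then h.choose else P

theorem subset_extend {P : Finset X} (hP : #P ≤ n) (hn : n ≤ Fintype.card X) :
    P ⊆ extend n P ∧ #(extend n P) = n := by
  have h := exists_superset_card_eq hP hn
  rw [extend, dif_pos h]
  exact h.choose_spec

theorem extend_eq_self {P : Finset X} (hP : #P = n) : extend n P = P := by
  have h : ∃ U, P ⊆ U ∧ #U = n := ⟨P, subset_rfl, hP⟩
  rw [extend, dif_pos h]
  exact (eq_of_subset_of_card_le h.choose_spec.1 (by rw [h.choose_spec.2, hP])).symm

noncomputable def pairSign (n : ℕ) (S T : Finset X) : Bool :=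
  if Disjoint S T then spreadSign S T
  else leastMem (extend n (S ∪ T) \ symmDiff S T) (S ∩ T)

noncomputable def pairColor (n : ℕ) (S T : Finset X) : Finset X × Bool :=
  (extend n (S ∪ T), pairSign n S T)

theorem pairColor_of_disjoint {S T : Finset X} (hST : Disjoint S T) (h : #S + #T = n) :
    pairColor n S T = (S ∪ T, spreadSign S T) := by
  rw [pairColor, pairSign, if_pos hST, extend_eq_self (by rw [card_union_of_disjoint hST, h])]

theorem pairSign_swap_ne {S T : Finset X} (hST : Disjoint S T) (hne : (S ∪ T).Nonempty) :
    pairSign n T S ≠ pairSign n S T := by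
  simp [pairSign, hST, hST.symm, spreadSign_swap hST hne]

theorem pairSign_ne_of_not_disjoint {S T S' T' : Finset X} (hS : Disjoint S S')
    (hST : ¬Disjoint S T) (hST' : ¬Disjoint S' T')
    (hU : extend n (S ∪ T) = extend n (S' ∪ T')) (hD : S ∩ T = (S ∪ T) \ (S' ∪ T'))
    (hD' : S' ∩ T' = (S' ∪ T') \ (S ∪ T)) (hPP' : S ∪ T ∪ (S' ∪ T') = extend n (S ∪ T)) :
    pairSign n S T ≠ pairSign n S' T' := by
  have hsymm : symmDiff S T = (S ∪ T) ∩ (S' ∪ T') := by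
    rw [symmDiff_eq_sup_sdiff_inf, sup_eq_union, inf_eq_inter, hD, sdiff_sdiff_self_left]
  have hsymm' : symmDiff S' T' = (S ∪ T) ∩ (S' ∪ T') := by
    rw [symmDiff_eq_sup_sdiff_inf, sup_eq_union, inf_eq_inter, hD', sdiff_sdiff_self_left,
      inter_comm]
  have hW : S ∩ T ⊆ extend n (S ∪ T) \ ((S ∪ T) ∩ (S' ∪ T')) := by
    rw [hD, ← hPP']
    intro x
    simp only [mem_sdiff, mem_inter, mem_union]
    tauto
  have hcover : extend n (S ∪ T) \ ((S ∪ T) ∩ (S' ∪ T')) ⊆ S ∩ T ∪ S' ∩ T' := by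
    rw [hD, hD', ← hPP']
    intro x
    simp only [mem_sdiff, mem_inter, mem_union]
    tauto
  rw [pairSign, pairSign, if_neg hST, if_neg hST', hsymm, hsymm', ← hU,
    leastMem_eq_not ((not_disjoint_iff_nonempty_inter.1 hST).mono hW) hcover
      (hS.mono inter_subset_left inter_subset_left)]
  exact Bool.not_ne_self _

theorem pairColor_ne (hn : 0 < n) (hX : n ≤ Fintype.card X) {S T S' T' : Finset X}
    (h : #S + #T = n) (h' : #S' + #T' = n) (hS : Disjoint S S') (hT : Disjoint T T') :
    pairColor n S T ≠ pairColor n S' T' := by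
  intro heq
  simp only [pairColor, Prod.mk.injEq] at heq
  obtain ⟨hU, hsign⟩ := heq
  obtain ⟨hPU, hUn⟩ := subset_extend ((card_union_le S T).trans h.le) hX
  obtain ⟨hPU', -⟩ := subset_extend ((card_union_le S' T').trans h'.le) hX
  rw [← hU] at hPU'
  obtain ⟨hD, hDD', hPP'⟩ := inter_eq_sdiff_of_subset (by omega) (by omega) hS hT hPU hPU'
  obtain ⟨hD', -, -⟩ := inter_eq_sdiff_of_subset (by omega) (by omega) hS.symm hT.symm hPU' hPU
  have hST' : Disjoint S T ↔ Disjoint S' T' := by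
    rw [disjoint_iff_inter_eq_empty, disjoint_iff_inter_eq_empty, ← card_eq_zero,
      ← card_eq_zero, hDD']
  by_cases hST : Disjoint S T
  · have hsub : S ∪ T ⊆ S' ∪ T' := by
      rw [← sdiff_eq_empty_iff_subset, ← hD, ← disjoint_iff_inter_eq_empty]
      exact hST
    have hsub' : S' ∪ T' ⊆ S ∪ T := by
      rw [← sdiff_eq_empty_iff_subset, ← hD', ← disjoint_iff_inter_eq_empty]
      exact hST'.1 hST
    obtain ⟨hS'T, hT'S⟩ := eq_swap_of_union_eq hS hT (hsub.antisymm hsub')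
    have hne : (S ∪ T).Nonempty := by rw [← card_pos, card_union_of_disjoint hST]; omega
    rw [hS'T, hT'S] at hsign
    exact pairSign_swap_ne hST hne hsign.symm
  · exact pairSign_ne_of_not_disjoint hS hST (hST'.not.1 hST) hU hD hD' hPP' hsign

end PairColor

section Parts

variable {X Z : Type*}

def ofParts (S T : Finset X) (R : Finset Z) : Finset ((X ⊕ X) ⊕ Z) := (S.disjSum T).disjSum R

@[simp]
theorem card_ofParts (S T : Finset X) (R : Finset Z) : #(ofParts S T R) = #S + #T + #R := by
  simp only [ofParts, card_disjSum]

theorem disjoint_ofParts {S T S' T' : Finset X} {R R' : Finset Z} :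
    Disjoint (ofParts S T R) (ofParts S' T' R') ↔
      Disjoint S S' ∧ Disjoint T T' ∧ Disjoint R R' := by
  rw [ofParts, ofParts, disjoint_disjSum_disjSum, disjoint_disjSum_disjSum, and_assoc]

theorem ofParts_toLeft_toRight (A : Finset ((X ⊕ X) ⊕ Z)) :
    ofParts A.toLeft.toLeft A.toLeft.toRight A.toRight = A := by
  rw [ofParts, toLeft_disjSum_toRight, toLeft_disjSum_toRight]

end Parts

section Colors

variable {X Z : Type*} [Fintype X] [Fintype Z] {n : ℕ}

variable (X Z) in
def colors (n : ℕ) : Finset ((Finset X × Bool) ⊕ Z) :=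
  ((univ.powersetCard n) ×ˢ univ).disjSum univ

@[simp]
theorem inl_mem_colors {U : Finset X} {b : Bool} : .inl (U, b) ∈ colors X Z n ↔ #U = n := by
  simp [colors]

@[simp]
theorem inr_mem_colors (z : Z) : .inr z ∈ colors X Z n := by
  simp [colors]

theorem card_colors : #(colors X Z n) = 2 * (Fintype.card X).choose n + Fintype.card Z := by
  simp [colors, card_disjSum, card_product, card_powersetCard, mul_comm]

end Colors

section Color

variable {X Z : Type*} [LinearOrder X] [Fintype X] {n : ℕ}

noncomputable def color (n : ℕ) (A : Finset ((X ⊕ X) ⊕ Z)) : (Finset X × Bool) ⊕ Z :=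
  if h : A.toRight.Nonempty then .inr h.choose
  else .inl (pairColor n A.toLeft.toLeft A.toLeft.toRight)

theorem color_ofParts_of_mem [Subsingleton Z] (S T : Finset X) {R : Finset Z} {z : Z}
    (hz : z ∈ R) : color n (ofParts S T R) = .inr z := by
  have h : (ofParts S T R).toRight.Nonempty := ⟨z, by simpa [ofParts] using hz⟩
  rw [color, dif_pos h, Subsingleton.elim h.choose z]

theorem color_ofParts_empty (S T : Finset X) :
    color n (ofParts S T (∅ : Finset Z)) = .inl (pairColor n S T) := by
  simp only [color, ofParts, toRight_disjSum, toLeft_disjSum, Finset.not_nonempty_empty,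
    dite_false]

theorem color_ne_of_disjoint [Subsingleton Z] (hn : 0 < n) (hX : n ≤ Fintype.card X)
    {A B : Finset ((X ⊕ X) ⊕ Z)} (hA : #A = n) (hB : #B = n) (hAB : Disjoint A B) :
    color n A ≠ color n B := by
  obtain ⟨S, T, R, rfl⟩ : ∃ S T R, ofParts S T R = A := ⟨_, _, _, ofParts_toLeft_toRight A⟩
  obtain ⟨S', T', R', rfl⟩ : ∃ S T R, ofParts S T R = B := ⟨_, _, _, ofParts_toLeft_toRight B⟩
  obtain ⟨hS, hT, hR⟩ := disjoint_ofParts.1 hAB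
  rw [card_ofParts] at hA hB
  rcases R.eq_empty_or_nonempty with rfl | ⟨z, hz⟩
  · rcases R'.eq_empty_or_nonempty with rfl | ⟨z', hz'⟩
    · rw [color_ofParts_empty, color_ofParts_empty, Ne, Sum.inl.injEq]
      exact pairColor_ne hn hX (by simpa using hA) (by simpa using hB) hS hT
    · rw [color_ofParts_empty, color_ofParts_of_mem _ _ hz']
      exact Sum.inl_ne_inr
  · rcases R'.eq_empty_or_nonempty with rfl | ⟨z', hz'⟩
    · rw [color_ofParts_empty, color_ofParts_of_mem _ _ hz]
      exact Sum.inr_ne_inl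
    · exact absurd (Subsingleton.elim z z' ▸ hz') (disjoint_left.1 hR hz)

theorem color_spread {S T : Finset X} (hST : Disjoint S T) (h : #S + #T = n) :
    color n (ofParts S T (∅ : Finset Z)) = .inl (S ∪ T, spreadSign S T) := by
  rw [color_ofParts_empty, pairColor_of_disjoint hST h]

theorem color_lower {U : Finset X} (hU : #U = n) (hn : 0 < n) :
    color n (ofParts U ∅ (∅ : Finset Z)) = .inl (U, false) := by
  rw [color_spread (disjoint_empty_right U) (by simpa using hU), union_empty,
    spreadSign_empty_right (card_pos.1 (hU ▸ hn))]

theorem color_upper {U : Finset X} (hU : #U = n) (hn : 0 < n) :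
    color n (ofParts ∅ U (∅ : Finset Z)) = .inl (U, true) := by
  rw [color_spread (disjoint_empty_left U) (by simpa using hU), empty_union,
    spreadSign_empty_left (card_pos.1 (hU ▸ hn))]

theorem color_lower_singleton {U : Finset X} {x : X} (hx : x ∈ U) (hU : #U = n) (hn : 3 ≤ n) :
    color n (ofParts {x} (U.erase x) (∅ : Finset Z)) = .inl (U, false) := by
  have hcard := card_erase_of_mem hx
  rw [color_spread (disjoint_singleton_left.2 (notMem_erase x U)) (by rw [card_singleton]; omega),
    singleton_union, insert_erase hx, spreadSign_singleton_left x (by omega)]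

theorem color_upper_singleton {U : Finset X} {x : X} (hx : x ∈ U) (hU : #U = n) (hn : 3 ≤ n) :
    color n (ofParts (U.erase x) {x} (∅ : Finset Z)) = .inl (U, true) := by
  have hcard := card_erase_of_mem hx
  rw [color_spread (disjoint_singleton_right.2 (notMem_erase x U)) (by rw [card_singleton]; omega),
    union_singleton, insert_erase hx, spreadSign_singleton_right x (by omega)]

variable [Fintype Z]

def IsBVertex (n : ℕ) (A : Finset ((X ⊕ X) ⊕ Z)) : Prop :=
  ∀ j ∈ colors X Z n, j ≠ color n A → ∃ B, #B = n ∧ Disjoint A B ∧ color n B = j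

variable [Subsingleton Z]

theorem color_mem_colors (hX : n ≤ Fintype.card X)
    {A : Finset ((X ⊕ X) ⊕ Z)} (hA : #A = n) : color n A ∈ colors X Z n := by
  obtain ⟨S, T, R, rfl⟩ : ∃ S T R, ofParts S T R = A := ⟨_, _, _, ofParts_toLeft_toRight A⟩
  rw [card_ofParts] at hA
  rcases R.eq_empty_or_nonempty with rfl | ⟨z, hz⟩
  · rw [color_ofParts_empty, pairColor, inl_mem_colors]
    exact (subset_extend ((card_union_le S T).trans (by simpa using hA.le)) hX).2
  · rw [color_ofParts_of_mem _ _ hz]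
    exact inr_mem_colors z

theorem isBVertex_lower (hn : 3 ≤ n) {K : Finset X} (hK : #K = n - 1) {U : Finset X}
    (hU : #U = n) :
    IsBVertex n (ofParts U ∅ (∅ : Finset Z)) := by
  rw [IsBVertex, color_lower hU (by omega)]
  rintro (⟨U', _ | _⟩ | z) hj hne
  · rw [inl_mem_colors] at hj
    obtain ⟨x, hxU', hxU⟩ :=
      exists_mem_notMem_of_card_eq_of_ne (hU.trans hj.symm) fun h => hne (by rw [h])
    refine ⟨_, ?_, ?_, color_lower_singleton hxU' hj hn⟩
    · simp [card_erase_of_mem hxU']; omega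
    · simp [disjoint_ofParts, hxU]
  · rw [inl_mem_colors] at hj
    exact ⟨_, by simpa using hj, by simp [disjoint_ofParts], color_upper hj (by omega)⟩
  · exact ⟨ofParts ∅ K {z}, by simp; omega, by simp [disjoint_ofParts],
      color_ofParts_of_mem _ _ (mem_singleton_self z)⟩

theorem isBVertex_upper (hn : 3 ≤ n) {K : Finset X} (hK : #K = n - 1) {U : Finset X}
    (hU : #U = n) :
    IsBVertex n (ofParts ∅ U (∅ : Finset Z)) := by
  rw [IsBVertex, color_upper hU (by omega)]
  rintro (⟨U', _ | _⟩ | z) hj hne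
  · rw [inl_mem_colors] at hj
    exact ⟨_, by simpa using hj, by simp [disjoint_ofParts], color_lower hj (by omega)⟩
  · rw [inl_mem_colors] at hj
    obtain ⟨x, hxU', hxU⟩ :=
      exists_mem_notMem_of_card_eq_of_ne (hU.trans hj.symm) fun h => hne (by rw [h])
    refine ⟨_, ?_, ?_, color_upper_singleton hxU' hj hn⟩
    · simp [card_erase_of_mem hxU']; omega
    · simp [disjoint_ofParts, hxU]
  · exact ⟨ofParts K ∅ {z}, by simp; omega, by simp [disjoint_ofParts],
      color_ofParts_of_mem _ _ (mem_singleton_self z)⟩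

theorem isBVertex_extra (hn : 3 ≤ n) {K : Finset X} (hK : #K = n - 1) (z : Z) :
    IsBVertex n (ofParts K ∅ {z}) := by
  rw [IsBVertex, color_ofParts_of_mem _ _ (mem_singleton_self z)]
  rintro (⟨U', _ | _⟩ | z') hj hne
  · rw [inl_mem_colors] at hj
    obtain ⟨x, hxU', hxK⟩ := exists_mem_notMem_of_card_lt_card (s := K) (t := U') (by omega)
    refine ⟨_, ?_, ?_, color_lower_singleton hxU' hj hn⟩
    · simp [card_erase_of_mem hxU']; omega
    · simp [disjoint_ofParts, hxK]
  · rw [inl_mem_colors] at hj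
    exact ⟨_, by simpa using hj, by simp [disjoint_ofParts], color_upper hj (by omega)⟩
  · exact absurd (congrArg Sum.inr (Subsingleton.elim z' z)) hne

theorem le_bChromatic_kneserGraph (hn : 3 ≤ n) (hX : n ≤ Fintype.card X) :
    2 * (Fintype.card X).choose n + Fintype.card Z ≤
      bChromatic (kneserGraph ((X ⊕ X) ⊕ Z) n) := by
  obtain ⟨K, -, hK⟩ := exists_subset_card_eq (s := (univ : Finset X)) (n := n - 1)
    (by rw [card_univ]; omega)
  rw [← card_colors]
  refine card_le_bChromatic_kneserGraph (color n) (colors X Z n)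
    (fun A hA => color_mem_colors hX hA)
    (fun A B hA hB => color_ne_of_disjoint (by omega) hX hA hB) ?_
  rintro (⟨U, _ | _⟩ | z) hi
  · rw [inl_mem_colors] at hi
    have hcolor := color_lower (Z := Z) hi (by omega)
    exact ⟨_, by simpa using hi, hcolor, hcolor ▸ isBVertex_lower hn hK hi⟩
  · rw [inl_mem_colors] at hi
    have hcolor := color_upper (Z := Z) hi (by omega)
    exact ⟨_, by simpa using hi, hcolor, hcolor ▸ isBVertex_upper hn hK hi⟩
  · have hcolor := color_ofParts_of_mem (n := n) K ∅ (mem_singleton_self z)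
    exact ⟨_, by simp; omega, hcolor, hcolor ▸ isBVertex_extra hn hK z⟩

end Color

end KneserBColoring

/-- for `n ≥ 3` and `m ≥ 2n`, `χ_b(KG(m,n)) ≥ 2·C(⌊m/2⌋, n)`. -/
theorem stmt5 (m n : ℕ) (hn : 3 ≤ n) (hm : 2 * n ≤ m) :
    2 * (m / 2).choose n ≤ bChromatic (kneser m n) := by
  have : Subsingleton (Fin (m % 2)) := Fin.subsingleton_iff_le_one.2 (by omega)
  let e : Fin m ≃ (Fin (m / 2) ⊕ Fin (m / 2)) ⊕ Fin (m % 2) :=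
    Fintype.equivOfCardEq (by simp; omega)
  calc 2 * (m / 2).choose n
      ≤ 2 * (Fintype.card (Fin (m / 2))).choose n + Fintype.card (Fin (m % 2)) := by simp
    _ ≤ bChromatic (kneserGraph _ n) :=
      KneserBColoring.le_bChromatic_kneserGraph hn (by simp; omega)
    _ = bChromatic (kneser m n) := by
      rw [kneser_eq_kneserGraph, (kneserGraphCongr e n).bChromatic_eq]
end

section
/- Let m = 2r, n = 2s+1, r ≥ n + 1, X = {0,...,r-1}, Y = {r,...,2r-1}, f(x) = r + x. Let A, B ⊆ X be n-subsets with A ∩ B ≠ ∅ and A ≠ B. Then there exists an n-subset C of [m] such that C ∩ A = ∅ and C = {i} ∪ f(B \ {i}) for some i ∈ B \ A. In particular, every vertex A with A ⊆ X has, for every color class B ⊆ X of the coloring h from the odd case construction, a neighbor colored B. -/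
open Finset

/-! The vertex `C = {i} ∪ f(B \ {i})` keeps only `i` in `X = range r` and moves the rest of `B`
into `Y = f(X)`, where `A ⊆ X` cannot meet it; so choosing `i ∈ B \ A`, which exists because
`A ≠ B` have the same size, makes `C` disjoint from `A`. -/

namespace Finset

lemma exists_mem_notMem_of_card_eq_of_ne_s9 {α : Type*} {A B : Finset α} (hcard : A.card = B.card)
    (hne : A ≠ B) : ∃ i ∈ B, i ∉ A := by
  by_contra! hBA
  exact hne (eq_of_subset_of_card_le hBA hcard.le).symm

def shiftAllBut (r i : ℕ) (B : Finset ℕ) : Finset ℕ :=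
  insert i ((B.erase i).image (· + r))

variable {r i : ℕ} {B : Finset ℕ}

lemma shiftAllBut_subset_range (hBX : B ⊆ range r) (hiB : i ∈ B) :
    shiftAllBut r i B ⊆ range (2 * r) := by
  intro x hx
  rcases mem_insert.mp hx with rfl | hx
  · have := mem_range.mp (hBX hiB)
    exact mem_range.mpr (by omega)
  · obtain ⟨b, hb, rfl⟩ := mem_image.mp hx
    have := mem_range.mp (hBX (mem_of_mem_erase hb))
    exact mem_range.mpr (by omega)

lemma card_shiftAllBut (hBX : B ⊆ range r) (hiB : i ∈ B) :
    (shiftAllBut r i B).card = B.card := by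
  have hi : i ∉ (B.erase i).image (· + r) := by
    rintro h
    obtain ⟨b, -, hb⟩ := mem_image.mp h
    have := mem_range.mp (hBX hiB)
    omega
  rw [shiftAllBut, card_insert_of_notMem hi, card_image_of_injective _ (add_left_injective r),
    card_erase_add_one hiB]

lemma disjoint_shiftAllBut {A : Finset ℕ} (hAX : A ⊆ range r) (hiA : i ∉ A) :
    Disjoint (shiftAllBut r i B) A := by
  rw [disjoint_left]
  intro x hx hxA
  rcases mem_insert.mp hx with rfl | hx
  · exact hiA hxA
  · obtain ⟨b, -, rfl⟩ := mem_image.mp hx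
    have := mem_range.mp (hAX hxA)
    omega

end Finset

theorem stmt9_general (r n : ℕ)
    (A B : Finset ℕ) (hAX : A ⊆ Finset.range r) (hBX : B ⊆ Finset.range r)
    (hA : A.card = n) (hB : B.card = n)
    (hne : A ≠ B) :
    ∃ i ∈ B, i ∉ A ∧
      letI C : Finset ℕ := insert i ((B.erase i).image (· + r))
      C ⊆ Finset.range (2 * r) ∧ C.card = n ∧ Disjoint C A := by
  obtain ⟨i, hiB, hiA⟩ := exists_mem_notMem_of_card_eq_of_ne_s9 (hA.trans hB.symm) hne
  exact ⟨i, hiB, hiA, shiftAllBut_subset_range hBX hiB,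
    (card_shiftAllBut hBX hiB).trans hB, disjoint_shiftAllBut hAX hiA⟩

/-- with `m = 2r`, `n = 2s+1`, `r ≥ n+1`, `X = {0,…,r-1}` and
`f x = x + r`, if `A, B ⊆ X` are `n`-subsets with `A ∩ B ≠ ∅` and `A ≠ B`, then
there is `i ∈ B \ A` such that `C = {i} ∪ f(B \ {i})` is an `n`-subset of
`[2r]` disjoint from `A`. -/
theorem stmt9 (r s n : ℕ) (hn : n = 2 * s + 1) (hr : n + 1 ≤ r)
    (A B : Finset ℕ) (hAX : A ⊆ Finset.range r) (hBX : B ⊆ Finset.range r)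
    (hA : A.card = n) (hB : B.card = n)
    (hmeet : (A ∩ B).Nonempty) (hne : A ≠ B) :
    ∃ i ∈ B, i ∉ A ∧
      letI C : Finset ℕ := insert i ((B.erase i).image (· + r))
      C ⊆ Finset.range (2 * r) ∧ C.card = n ∧ Disjoint C A :=
  stmt9_general r n A B hAX hBX hA hB hne
end
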